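/- arXiv:1407.8240 — 2 statements merged into one kernel-verified Lean document; each statement's English description precedes it below -/
import Mathlib

section
/- Let R carry both an r-dimensional right Novikov conformal superalgebra λ-product ∘_λ and an r-dimensional Lie conformal superalgebra λ-bracket [·_λ·] on the same ℤ/2ℤ-graded ℂ[T₁,…,T_r]-module, satisfying the compatibility [a_λ(b ∘_μ c)] + a ∘_λ [b_μ c] − [a_λ b] ∘_{λ+μ} c − (−1)^{αβ}([b_μ(a ∘_λ c)] + b ∘_μ [a_λ c]) = 0 for homogeneous a, b of parities α, β and all c. Define a ∗_λ b = a ∘_λ b + (−1)^{αβ} b ∘_{−λ−T} a. Then [a_λ(b ∘_μ c)] + a ∗_λ [b_μ c] + [(a ∘_λ b)_{λ+μ} c] − [(a ∗_λ b)_{λ+μ} c] − [a_λ b] ∗_{λ+μ} c − (−1)^{αβ}[b_μ(a ∗_λ c)] = 0 for homogeneous a, b of parities α, β and all c. -/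
/-!
Expanding every `∗` by its definition, the claimed expression differs from the compatibility
identity at `(a, b, c)` by five terms. Up to the sign `(−1)^{α(β+γ)}` these are the
compatibility identity at `(b, c, a)` after the substitution `λ ↦ μ, μ ↦ −λ−μ−T`, once
skew-symmetry of the bracket has rewritten `[c_μ a]`, `[b_λ a]` and `[c_μ (b ∘_λ a)]`.

To compare such terms, a composite `x_λ F(μ)` is brought to the normal form
`Σ_k M^k (x_λ v_k)`, `F = Σ_k μ^k v_k`, where `M` is the family of operators that `μ` becomes
on `ℂ[λ, μ] ⊗ R`; all these operators are built from monomials in `λ, μ` and the `T_i`, so they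
commute. Since everything is additive in `c`, it suffices to treat homogeneous `c`.
-/

open Finsupp MvPolynomial
open scoped TensorProduct

namespace CA

noncomputable section

variable (r : ℕ) (R : Type*) [AddCommGroup R] [Module ℂ R]
  [Module (MvPolynomial (Fin r) ℂ) R] [IsScalarTower ℂ (MvPolynomial (Fin r) ℂ) R]

/-- Polynomials in `r` variables (the `λ`'s) with coefficients in `R`,
encoded via exponent multi-indices. -/
abbrev VP : Type _ := (Fin r →₀ ℕ) →₀ R

/-- Polynomials in two families of `r` variables (`λ`'s = `Sum.inl`, `μ`'s = `Sum.inr`)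
with coefficients in `R`. -/
abbrev BP : Type _ := ((Fin r ⊕ Fin r) →₀ ℕ) →₀ R

/-- The action of `T i` on `R`, as a `ℂ`-linear endomorphism. -/
def tAct (i : Fin r) : R →ₗ[ℂ] R where
  toFun v := (X i : MvPolynomial (Fin r) ℂ) • v
  map_add' u v := smul_add _ u v
  map_smul' c v := by
    simp only [RingHom.id_apply]
    rw [← algebraMap_smul (MvPolynomial (Fin r) ℂ) c v, ← mul_smul, mul_comm, mul_smul,
      algebraMap_smul]

/-- Multiplication by the variable `λ i` on `VP`. -/
def vLam (i : Fin r) : Module.End ℂ (VP r R) :=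
  Finsupp.lmapDomain R ℂ (· + Finsupp.single i 1)

/-- The action of `T i` on the coefficients of an element of `VP`. -/
def vT (i : Fin r) : Module.End ℂ (VP r R) :=
  Finsupp.mapRange.linearMap (tAct r R i)

/-- The substitution `λ ↦ -λ - T` on `VP`. -/
def vNeg (F : VP r R) : VP r R :=
  F.sum fun k v =>
    ((List.ofFn fun i : Fin r => (-(vLam r R i) - vT r R i) ^ (k i)).prod)
      (Finsupp.single 0 v)

/-- Multiplication by the monomial with exponent `e` on `BP`. -/
def bShift (e : (Fin r ⊕ Fin r) →₀ ℕ) : Module.End ℂ (BP r R) :=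
  Finsupp.lmapDomain R ℂ (· + e)

/-- Multiplication by `λ i` on `BP`. -/
def bLam (i : Fin r) : Module.End ℂ (BP r R) := bShift r R (Finsupp.single (Sum.inl i) 1)

/-- Multiplication by `μ i` on `BP`. -/
def bMu (i : Fin r) : Module.End ℂ (BP r R) := bShift r R (Finsupp.single (Sum.inr i) 1)

/-- The action of `T i` on the coefficients of an element of `BP`. -/
def bT (i : Fin r) : Module.End ℂ (BP r R) :=
  Finsupp.mapRange.linearMap (tAct r R i)

/-- Evaluation of an element of `VP` at a (commuting) family `s` of operators on `BP`:
`Σ_k λ^k v_k ↦ Σ_k s^k (v_k)`. -/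
def ev (s : Fin r → Module.End ℂ (BP r R)) (F : VP r R) : BP r R :=
  F.sum fun k v => ((List.ofFn fun i : Fin r => (s i) ^ (k i)).prod) (Finsupp.single 0 v)

/-- Extension of a `λ`-product `p` to a polynomial first argument, evaluated at the
family of operators `s`:  `(Σ_e x^e v_e)_s b = Σ_e x^e · (p v_e b)(s)`. -/
def evL (p : R → R → VP r R) (s : Fin r → Module.End ℂ (BP r R)) (F : BP r R) (b : R) :
    BP r R :=
  F.sum fun e v => bShift r R e (ev r R s (p v b))

/-- Extension of a `λ`-product `p` to a polynomial second argument, evaluated at the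
family of operators `s`:  `a_s (Σ_e x^e w_e) = Σ_e x^e · (p a w_e)(s)`. -/
def evR (p : R → R → VP r R) (s : Fin r → Module.End ℂ (BP r R)) (a : R) (G : BP r R) :
    BP r R :=
  G.sum fun e w => bShift r R e (ev r R s (p a w))

/-- The family `λ`. -/
def FL : Fin r → Module.End ℂ (BP r R) := fun i => bLam r R i
/-- The family `μ`. -/
def FM : Fin r → Module.End ℂ (BP r R) := fun i => bMu r R i
/-- The family `λ + μ`. -/
def FLM : Fin r → Module.End ℂ (BP r R) := fun i => bLam r R i + bMu r R i
/-- The family `-λ - T`. -/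
def FNL : Fin r → Module.End ℂ (BP r R) := fun i => -(bLam r R i) - bT r R i
/-- The family `-μ - T`. -/
def FNM : Fin r → Module.End ℂ (BP r R) := fun i => -(bMu r R i) - bT r R i
/-- The family `-λ - μ - T`. -/
def FNLM : Fin r → Module.End ℂ (BP r R) := fun i => -(bLam r R i) - bMu r R i - bT r R i

/-- The sign `(-1)^(αβ)` for parities `α β : ZMod 2`. -/
def sgn (α β : ZMod 2) : ℤ := (-1) ^ (α.val * β.val)

/-- `ℂ`-bilinearity of a `λ`-product. -/
def Bilin (p : R → R → VP r R) : Prop :=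
  (∀ a b c : R, p (a + b) c = p a c + p b c) ∧
  (∀ a b c : R, p a (b + c) = p a b + p a c) ∧
  (∀ (z : ℂ) (a b : R), p (z • a) b = z • p a b) ∧
  (∀ (z : ℂ) (a b : R), p a (z • b) = z • p a b)

/-- A `λ`-product is parity-preserving w.r.t. a grading `G`. -/
def ParityPres (G : ZMod 2 → Submodule ℂ R) (p : R → R → VP r R) : Prop :=
  ∀ (α β : ZMod 2) (a b : R), a ∈ G α → b ∈ G β → ∀ k, p a b k ∈ G (α + β)

/-- Conformal sesquilinearity: `(T_i a)_λ b = -λ_i (a_λ b)` and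
`a_λ (T_i b) = (T_i + λ_i)(a_λ b)`. -/
def Sesq (p : R → R → VP r R) : Prop :=
  ∀ (i : Fin r) (a b : R),
    p ((X i : MvPolynomial (Fin r) ℂ) • a) b = (-(vLam r R i)) (p a b) ∧
    p a ((X i : MvPolynomial (Fin r) ℂ) • b) = (vT r R i + vLam r R i) (p a b)

/-- `G` is a `ℤ/2ℤ`-grading of the `ℂ[T]`-module `R`. -/
def IsGraded (G : ZMod 2 → Submodule ℂ R) : Prop :=
  DirectSum.IsInternal G ∧
  ∀ (i : Fin r) (α : ZMod 2) (v : R), v ∈ G α →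
    (X i : MvPolynomial (Fin r) ℂ) • v ∈ G α

/-- Conformal skew-symmetry `[a_λ b] = -(-1)^{αβ} [b_{-λ-T} a]`. -/
def Skew (G : ZMod 2 → Submodule ℂ R) (q : R → R → VP r R) : Prop :=
  ∀ (α β : ZMod 2) (a b : R), a ∈ G α → b ∈ G β →
    q a b = -(sgn α β • vNeg r R (q b a))

/-- Conformal Jacobi identity
`[a_λ [b_μ c]] = [[a_λ b]_{λ+μ} c] + (-1)^{αβ} [b_μ [a_λ c]]`. -/
def Jacobi (G : ZMod 2 → Submodule ℂ R) (q : R → R → VP r R) : Prop :=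
  ∀ (α β : ZMod 2) (a b c : R), a ∈ G α → b ∈ G β →
    evR r R q (FL r R) a (ev r R (FM r R) (q b c)) =
      evL r R q (FLM r R) (ev r R (FL r R) (q a b)) c +
      sgn α β • evR r R q (FM r R) b (ev r R (FL r R) (q a c))

/-- `q` is an `r`-dimensional Lie conformal superalgebra `λ`-bracket on `R` graded by `G`. -/
def IsLieConfSuper (G : ZMod 2 → Submodule ℂ R) (q : R → R → VP r R) : Prop :=
  Bilin r R q ∧ ParityPres r R G q ∧ Sesq r R q ∧ Skew r R G q ∧ Jacobi r R G q

/-- Left Novikov conformal identity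
`(a_λ b)_{λ+μ} c - a_λ (b_μ c) = (-1)^{αβ} ((b_μ a)_{λ+μ} c - b_μ (a_λ c))`. -/
def NovLeft1 (G : ZMod 2 → Submodule ℂ R) (p : R → R → VP r R) : Prop :=
  ∀ (α β : ZMod 2) (a b c : R), a ∈ G α → b ∈ G β →
    evL r R p (FLM r R) (ev r R (FL r R) (p a b)) c -
      evR r R p (FL r R) a (ev r R (FM r R) (p b c)) =
    sgn α β • (evL r R p (FLM r R) (ev r R (FM r R) (p b a)) c -
      evR r R p (FM r R) b (ev r R (FL r R) (p a c)))

/-- Left Novikov conformal identity `(a_λ b)_{λ+μ} c = (-1)^{βγ} (a_λ c)_{-μ-T} b`. -/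
def NovLeft2 (G : ZMod 2 → Submodule ℂ R) (p : R → R → VP r R) : Prop :=
  ∀ (β γ : ZMod 2) (a b c : R), b ∈ G β → c ∈ G γ →
    evL r R p (FLM r R) (ev r R (FL r R) (p a b)) c =
      sgn β γ • evL r R p (FNM r R) (ev r R (FL r R) (p a c)) b

/-- `p` is an `r`-dimensional (left) Novikov conformal superalgebra `λ`-product. -/
def IsNovLeft (G : ZMod 2 → Submodule ℂ R) (p : R → R → VP r R) : Prop :=
  Bilin r R p ∧ ParityPres r R G p ∧ Sesq r R p ∧ NovLeft1 r R G p ∧ NovLeft2 r R G p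

/-- Right Novikov conformal identity
`a_λ (b_μ c) - (a_λ b)_{λ+μ} c = (-1)^{βγ} (a_λ (c_{-μ-T} b) - (a_λ c)_{-μ-T} b)`. -/
def NovRight1 (G : ZMod 2 → Submodule ℂ R) (p : R → R → VP r R) : Prop :=
  ∀ (β γ : ZMod 2) (a b c : R), b ∈ G β → c ∈ G γ →
    evR r R p (FL r R) a (ev r R (FM r R) (p b c)) -
      evL r R p (FLM r R) (ev r R (FL r R) (p a b)) c =
    sgn β γ • (evR r R p (FL r R) a (ev r R (FNM r R) (p c b)) -
      evL r R p (FNM r R) (ev r R (FL r R) (p a c)) b)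

/-- Right Novikov conformal identity `a_λ (b_μ c) = (-1)^{αβ} b_μ (a_λ c)`. -/
def NovRight2 (G : ZMod 2 → Submodule ℂ R) (p : R → R → VP r R) : Prop :=
  ∀ (α β : ZMod 2) (a b c : R), a ∈ G α → b ∈ G β →
    evR r R p (FL r R) a (ev r R (FM r R) (p b c)) =
      sgn α β • evR r R p (FM r R) b (ev r R (FL r R) (p a c))

/-- `p` is an `r`-dimensional right Novikov conformal superalgebra `λ`-product. -/
def IsNovRight (G : ZMod 2 → Submodule ℂ R) (p : R → R → VP r R) : Prop :=
  Bilin r R p ∧ ParityPres r R G p ∧ Sesq r R p ∧ NovRight1 r R G p ∧ NovRight2 r R G p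

/-- The compatibility condition of a super Gel'fand-Dorfman conformal bialgebra:
`[(a_{-μ-T} b)_{-λ-T} c] + [a_{-μ-T} b]_{-λ-T} c - a_{-λ-μ-T} [b_{-λ-T} c]`
`- (-1)^{βγ} [(a_{-λ-T} c)_{-μ-T} b] - (-1)^{βγ} [a_{-λ-T} c]_{-μ-T} b = 0`. -/
def GDCompat (G : ZMod 2 → Submodule ℂ R) (p q : R → R → VP r R) : Prop :=
  ∀ (β γ : ZMod 2) (a b c : R), b ∈ G β → c ∈ G γ →
    evL r R q (FNL r R) (ev r R (FNM r R) (p a b)) c +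
    evL r R p (FNL r R) (ev r R (FNM r R) (q a b)) c -
    evR r R p (FNLM r R) a (ev r R (FNL r R) (q b c)) -
    sgn β γ • evL r R q (FNM r R) (ev r R (FNL r R) (p a c)) b -
    sgn β γ • evL r R p (FNM r R) (ev r R (FNL r R) (q a c)) b = 0

/-- `(R, p, q)` is an `r`-dimensional super Gel'fand-Dorfman conformal bialgebra. -/
def IsGDConf (G : ZMod 2 → Submodule ℂ R) (p q : R → R → VP r R) : Prop :=
  IsNovLeft r R G p ∧ IsLieConfSuper r R G q ∧ GDCompat r R G p q

/-! Ungraded (purely even) versions. -/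

def Skew' (q : R → R → VP r R) : Prop :=
  ∀ a b : R, q a b = -(vNeg r R (q b a))

def Jacobi' (q : R → R → VP r R) : Prop :=
  ∀ a b c : R,
    evR r R q (FL r R) a (ev r R (FM r R) (q b c)) =
      evL r R q (FLM r R) (ev r R (FL r R) (q a b)) c +
      evR r R q (FM r R) b (ev r R (FL r R) (q a c))

/-- `q` is an `r`-dimensional Lie conformal algebra `λ`-bracket on `R`. -/
def IsLieConf' (q : R → R → VP r R) : Prop :=
  Bilin r R q ∧ Sesq r R q ∧ Skew' r R q ∧ Jacobi' r R q

def NovLeft1' (p : R → R → VP r R) : Prop :=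
  ∀ a b c : R,
    evL r R p (FLM r R) (ev r R (FL r R) (p a b)) c -
      evR r R p (FL r R) a (ev r R (FM r R) (p b c)) =
    evL r R p (FLM r R) (ev r R (FM r R) (p b a)) c -
      evR r R p (FM r R) b (ev r R (FL r R) (p a c))

def NovLeft2' (p : R → R → VP r R) : Prop :=
  ∀ a b c : R,
    evL r R p (FLM r R) (ev r R (FL r R) (p a b)) c =
      evL r R p (FNM r R) (ev r R (FL r R) (p a c)) b

/-- `p` is an `r`-dimensional (left) Novikov conformal algebra `λ`-product. -/
def IsNovLeft' (p : R → R → VP r R) : Prop :=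
  Bilin r R p ∧ Sesq r R p ∧ NovLeft1' r R p ∧ NovLeft2' r R p

def GDCompat' (p q : R → R → VP r R) : Prop :=
  ∀ a b c : R,
    evL r R q (FNL r R) (ev r R (FNM r R) (p a b)) c +
    evL r R p (FNL r R) (ev r R (FNM r R) (q a b)) c -
    evR r R p (FNLM r R) a (ev r R (FNL r R) (q b c)) -
    evL r R q (FNM r R) (ev r R (FNL r R) (p a c)) b -
    evL r R p (FNM r R) (ev r R (FNL r R) (q a c)) b = 0

/-- `(R, p, q)` is an `r`-dimensional Gel'fand-Dorfman conformal bialgebra. -/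
def IsGDConf' (p q : R → R → VP r R) : Prop :=
  IsNovLeft' r R p ∧ IsLieConf' r R q ∧ GDCompat' r R p q

end

/-! Ordinary (non-conformal) structures on a complex vector space. -/

noncomputable section

variable (V : Type*) [AddCommGroup V] [Module ℂ V]

/-- `ℂ`-bilinearity of an ordinary product. -/
def BilinV (m : V → V → V) : Prop :=
  (∀ a b c : V, m (a + b) c = m a c + m b c) ∧
  (∀ a b c : V, m a (b + c) = m a b + m a c) ∧
  (∀ (z : ℂ) (a b : V), m (z • a) b = z • m a b) ∧
  (∀ (z : ℂ) (a b : V), m a (z • b) = z • m a b)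

def ParityPresV (G : ZMod 2 → Submodule ℂ V) (m : V → V → V) : Prop :=
  ∀ (α β : ZMod 2) (a b : V), a ∈ G α → b ∈ G β → m a b ∈ G (α + β)

/-- `br` is a Lie superalgebra bracket on `V` graded by `G`. -/
def IsLieSuper (G : ZMod 2 → Submodule ℂ V) (br : V → V → V) : Prop :=
  BilinV V br ∧ ParityPresV V G br ∧
  (∀ (α β : ZMod 2) (a b : V), a ∈ G α → b ∈ G β → br a b = -(sgn α β • br b a)) ∧
  (∀ (α β : ZMod 2) (a b : V), a ∈ G α → b ∈ G β → ∀ c : V,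
    br a (br b c) = br (br a b) c + sgn α β • br b (br a c))

/-- `m` is a (left) Novikov superalgebra product on `V` graded by `G`. -/
def IsNovSuper (G : ZMod 2 → Submodule ℂ V) (m : V → V → V) : Prop :=
  BilinV V m ∧ ParityPresV V G m ∧
  (∀ (β γ : ZMod 2) (b c : V), b ∈ G β → c ∈ G γ → ∀ a : V,
    m (m a b) c = sgn β γ • m (m a c) b) ∧
  (∀ (α β : ZMod 2) (a b : V), a ∈ G α → b ∈ G β → ∀ c : V,
    m (m a b) c - m a (m b c) = sgn α β • (m (m b a) c - m b (m a c)))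

/-- `m` is a supercommutative associative product on `V` graded by `G`. -/
def IsCommAssocSuper (G : ZMod 2 → Submodule ℂ V) (m : V → V → V) : Prop :=
  BilinV V m ∧ ParityPresV V G m ∧
  (∀ (α β : ZMod 2) (a b : V), a ∈ G α → b ∈ G β → m a b = sgn α β • m b a) ∧
  (∀ a b c : V, m (m a b) c = m a (m b c))

/-- `(V, m, dot)` is a Novikov-Poisson superalgebra. -/
def IsNovPoissonSuper (G : ZMod 2 → Submodule ℂ V) (m dot : V → V → V) : Prop :=
  IsNovSuper V G m ∧ IsCommAssocSuper V G dot ∧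
  (∀ (α β : ZMod 2) (a b : V), a ∈ G α → b ∈ G β → ∀ c : V,
    dot (m a b) c - m a (dot b c) = sgn α β • (dot (m b a) c - m b (dot a c))) ∧
  (∀ a b c : V, m (dot a b) c = dot a (m b c))

/-- `(V, br, m)` is a super Gel'fand-Dorfman bialgebra. -/
def IsGDSuper (G : ZMod 2 → Submodule ℂ V) (br m : V → V → V) : Prop :=
  IsLieSuper V G br ∧ IsNovSuper V G m ∧
  (∀ (β γ : ZMod 2) (b c : V), b ∈ G β → c ∈ G γ → ∀ a : V,
    br (m a b) c + m (br a b) c - m a (br b c) -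
      sgn β γ • br (m a c) b - sgn β γ • m (br a c) b = 0)

/-- `br` is a Lie algebra bracket on `V`. -/
def IsLieAlg (br : V → V → V) : Prop :=
  BilinV V br ∧ (∀ a b : V, br a b = -br b a) ∧
  (∀ a b c : V, br a (br b c) = br (br a b) c + br b (br a c))

/-- `m` is a (left) Novikov algebra product on `V`. -/
def IsNovAlg (m : V → V → V) : Prop :=
  BilinV V m ∧ (∀ a b c : V, m (m a b) c = m (m a c) b) ∧
  (∀ a b c : V, m (m a b) c - m a (m b c) = m (m b a) c - m b (m a c))

/-- `m` is a commutative associative product on `V`. -/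
def IsCommAssoc (m : V → V → V) : Prop :=
  BilinV V m ∧ (∀ a b : V, m a b = m b a) ∧ (∀ a b c : V, m (m a b) c = m a (m b c))

/-- `(V, m, dot)` is a Novikov-Poisson algebra. -/
def IsNovPoisson (m dot : V → V → V) : Prop :=
  IsNovAlg V m ∧ IsCommAssoc V dot ∧
  (∀ a b c : V, dot (m a b) c - m a (dot b c) = dot (m b a) c - m b (dot a c)) ∧
  (∀ a b c : V, m (dot a b) c = dot a (m b c))

/-- `(V, br, dot)` is a Lie-Poisson algebra. -/
def IsLiePoisson (br dot : V → V → V) : Prop :=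
  IsLieAlg V br ∧ IsCommAssoc V dot ∧
  (∀ a b c : V, br a (dot b c) = dot (br a b) c + dot b (br a c))

/-- `(V, br, m)` is a Gel'fand-Dorfman bialgebra. -/
def IsGD (br m : V → V → V) : Prop :=
  IsLieAlg V br ∧ IsNovAlg V m ∧
  (∀ a b c : V,
    br (m a b) c + m (br a b) c - m a (br b c) - br (m a c) b - m (br a c) b = 0)

end

/-! Free `ℂ[T₁,…,T_r]`-modules on a graded vector space. -/

noncomputable section

variable (r : ℕ) (V : Type*) [AddCommGroup V] [Module ℂ V]

/-- The free `ℂ[T₁,…,T_r]`-module `ℂ[T₁,…,T_r] ⊗ V` on the vector space `V`. -/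
abbrev TR : Type _ := MvPolynomial (Fin r) ℂ ⊗[ℂ] V

/-- The embedding of `V` into `ℂ[T₁,…,T_r] ⊗ V`. -/
def ιT : V → TR r V := fun v => (1 : MvPolynomial (Fin r) ℂ) ⊗ₜ[ℂ] v

/-- The grading of `ℂ[T₁,…,T_r] ⊗ V` induced by a grading of `V` (the `T`'s are even). -/
def TG (G : ZMod 2 → Submodule ℂ V) : ZMod 2 → Submodule ℂ (TR r V) := fun α =>
  Submodule.span ℂ {x : TR r V |
    ∃ (f : MvPolynomial (Fin r) ℂ) (v : V), v ∈ G α ∧ x = f ⊗ₜ[ℂ] v}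

end

section OpMonomial

variable {M : Type*} [Monoid M] {n : ℕ}

def opMonomial (S : Fin n → M) (k : Fin n → ℕ) : M :=
  (List.ofFn fun i => S i ^ k i).prod

theorem opMonomial_succ (S : Fin (n + 1) → M) (k : Fin (n + 1) → ℕ) :
    opMonomial S k = S 0 ^ k 0 * opMonomial (fun i => S i.succ) (fun i => k i.succ) := by
  rw [opMonomial, List.ofFn_succ, List.prod_cons, opMonomial]

theorem opMonomial_zero (S : Fin n → M) : opMonomial S 0 = 1 :=
  List.prod_eq_one (by simp)

theorem Commute.opMonomial_right {g : M} {S : Fin n → M} (h : ∀ i, Commute g (S i))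
    (k : Fin n → ℕ) : Commute g (opMonomial S k) :=
  Commute.list_prod_right _ _ (by simpa [List.mem_ofFn] using fun i => (h i).pow_right (k i))

theorem opMonomial_add {S : Fin n → M} (hS : ∀ i j, Commute (S i) (S j))
    (k k' : Fin n → ℕ) :
    opMonomial S (k + k') = opMonomial S k * opMonomial S k' := by
  induction n with
  | zero => simp [opMonomial]
  | succ n ih =>
    have hcomm : Commute (S 0 ^ k' 0) (opMonomial (fun i => S i.succ) fun i => k i.succ) :=
      Commute.opMonomial_right (fun i => (hS 0 i.succ).pow_left _) _
    rw [opMonomial_succ, opMonomial_succ S k, opMonomial_succ S k', Pi.add_apply, pow_add,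
      show (fun i : Fin n => (k + k') i.succ) = (fun i => k i.succ) + fun i => k' i.succ
        from rfl,
      ih (fun i j => hS _ _), mul_assoc, mul_assoc, ← mul_assoc (S 0 ^ k' 0), hcomm.eq,
      mul_assoc]

theorem opMonomial_single (S : Fin n → M) (j : Fin n) :
    opMonomial S (Pi.single j 1) = S j := by
  induction n with
  | zero => exact j.elim0
  | succ n ih =>
    rw [opMonomial_succ]
    cases j using Fin.cases with
    | zero => simp [opMonomial]
    | succ j =>
      have hj : (fun i : Fin n => (Pi.single j.succ 1 : Fin (n + 1) → ℕ) i.succ) =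
          Pi.single j 1 := by
        ext i
        simp [Pi.single_apply]
      rw [hj, ih, Pi.single_apply, if_neg (Fin.succ_ne_zero j).symm, pow_zero, one_mul]

end OpMonomial

theorem semiconj_opMonomial {R₀ A B : Type*} [Semiring R₀] [AddCommMonoid A] [Module R₀ A]
    [AddCommMonoid B] [Module R₀ B] {n : ℕ} {Φ : A → B}
    {S : Fin n → Module.End R₀ A} {S' : Fin n → Module.End R₀ B}
    (h : ∀ i, Function.Semiconj Φ (S i) (S' i)) (k : Fin n → ℕ) :
    Function.Semiconj Φ ⇑(opMonomial S k) ⇑(opMonomial S' k) := by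
  induction n with
  | zero => exact fun _ => rfl
  | succ n ih =>
    rw [opMonomial_succ, opMonomial_succ, Module.End.coe_mul, Module.End.coe_mul,
      Module.End.coe_pow, Module.End.coe_pow]
    exact ((h 0).iterate_right _).comp_right (ih (fun i => h i.succ) _)

theorem apply_eq_zero_of_iSup_eq_top {ι R₀ M X : Type*} [Semiring R₀] [AddCommMonoid M]
    [Module R₀ M] [AddCommGroup X] {G : ι → Submodule R₀ M} (hG : iSup G = ⊤) {φ : M → X}
    (hφ : ∀ x y, φ (x + y) = φ x + φ y) (h : ∀ i, ∀ x ∈ G i, φ x = 0) (x : M) :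
    φ x = 0 := by
  refine Submodule.iSup_induction G (motive := fun x => φ x = 0) (hG ▸ Submodule.mem_top) h
    ?_ fun x y hx hy => by rw [hφ, hx, hy, add_zero]
  simpa using hφ 0 0

theorem sgn_comm (α β : ZMod 2) : sgn α β = sgn β α := by
  rw [sgn, sgn, Nat.mul_comm]

theorem sgn_add_right (α β γ : ZMod 2) : sgn α (β + γ) = sgn α β * sgn α γ := by
  revert α β γ; decide

theorem sgn_add_left (α β γ : ZMod 2) : sgn (α + β) γ = sgn α γ * sgn β γ := by
  rw [sgn_comm, sgn_add_right, sgn_comm γ, sgn_comm γ]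

theorem sgn_mul_self (α β : ZMod 2) : sgn α β * sgn α β = 1 := by
  rw [sgn, ← pow_add, ← two_mul, pow_mul, neg_one_sq, one_pow]

noncomputable section

variable {r : ℕ} {R : Type*} [AddCommGroup R] [Module ℂ R]

theorem bShift_single (e d : (Fin r ⊕ Fin r) →₀ ℕ) (v : R) :
    bShift r R e (Finsupp.single d v) = Finsupp.single (d + e) v := by
  simp [bShift, Finsupp.mapDomain_single]

theorem bShift_zero : bShift r R 0 = 1 :=
  Finsupp.lhom_ext fun d v => by rw [bShift_single, add_zero, Module.End.one_apply]

theorem bShift_add (e e' : (Fin r ⊕ Fin r) →₀ ℕ) :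
    bShift r R (e + e') = bShift r R e' * bShift r R e :=
  Finsupp.lhom_ext fun d v => by
    rw [Module.End.mul_apply, bShift_single, bShift_single, bShift_single, add_assoc]

theorem commute_bShift_bShift (e e' : (Fin r ⊕ Fin r) →₀ ℕ) :
    Commute (bShift r R e) (bShift r R e') := by
  rw [Commute, SemiconjBy, ← bShift_add, ← bShift_add, add_comm]

section Evaluation

variable {E E' : Type*} [AddCommGroup E] [Module ℂ E] [AddCommGroup E'] [Module ℂ E']
  {h h' : R →ₗ[ℂ] E} {M : Fin r → Module.End ℂ E}

/-- `Σ_k λ^k v_k ↦ Σ_k M^k (h v_k)`: the variables `λ` are replaced by the family `M` and the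
coefficients are mapped by `h`. Both `ev` and `vNeg` are of this form. -/
def evalAt (h : R →ₗ[ℂ] E) (M : Fin r → Module.End ℂ E) : VP r R →ₗ[ℂ] E :=
  Finsupp.lsum ℂ fun k => opMonomial M k ∘ₗ h

theorem ev_eq_evalAt (S : Fin r → Module.End ℂ (BP r R)) (F : VP r R) :
    ev r R S F = evalAt (Finsupp.lsingle 0) S F := rfl

theorem ev_add (S : Fin r → Module.End ℂ (BP r R)) (F F' : VP r R) :
    ev r R S (F + F') = ev r R S F + ev r R S F' :=
  map_add (evalAt (Finsupp.lsingle 0) S) F F'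

theorem evalAt_single (k : Fin r →₀ ℕ) (v : R) :
    evalAt h M (Finsupp.single k v) = opMonomial M k (h v) := by
  simp [evalAt]

theorem evalAt_comp_lsingle_zero : evalAt h M ∘ₗ Finsupp.lsingle 0 = h :=
  LinearMap.ext fun v => by
    rw [LinearMap.comp_apply, Finsupp.lsingle_apply, evalAt_single, Finsupp.coe_zero,
      opMonomial_zero, Module.End.one_apply]

theorem evalAt_congr {F : VP r R} (H : ∀ k, h (F k) = h' (F k)) :
    evalAt h M F = evalAt h' M F :=
  Finsupp.sum_congr fun k _ => by simp only [LinearMap.comp_apply, H]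

theorem evalAt_add_left (F : VP r R) :
    evalAt (h + h') M F = evalAt h M F + evalAt h' M F := by
  simp only [evalAt, LinearMap.comp_add]
  exact LinearMap.congr_fun (map_add (Finsupp.lsum ℂ) _ _) F

theorem evalAt_zsmul_left (n : ℤ) (F : VP r R) : evalAt (n • h) M F = n • evalAt h M F := by
  simp only [evalAt, LinearMap.comp_smul]
  exact LinearMap.congr_fun (map_zsmul (Finsupp.lsum ℂ) n _) F

theorem map_evalAt (Φ : E →ₗ[ℂ] E') {M' : Fin r → Module.End ℂ E'}
    (hΦ : ∀ i, Function.Semiconj Φ (M i) (M' i)) (F : VP r R) :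
    Φ (evalAt h M F) = evalAt (Φ ∘ₗ h) M' F := by
  simp only [evalAt, Finsupp.lsum_apply, map_finsuppSum, LinearMap.comp_apply,
    (semiconj_opMonomial hΦ _).eq]
  rfl

theorem semiconj_evalAt_vLam (hM : ∀ i j, Commute (M i) (M j)) (j : Fin r) :
    Function.Semiconj (evalAt h M) (vLam r R j) (M j) := fun F =>
  LinearMap.congr_fun (f := evalAt h M ∘ₗ vLam r R j) (g := M j ∘ₗ evalAt h M)
    (Finsupp.lhom_ext fun k v => by
      simp only [LinearMap.comp_apply, vLam, Finsupp.lmapDomain_apply,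
        Finsupp.mapDomain_single, evalAt_single, Finsupp.coe_add, Finsupp.single_eq_pi_single,
        opMonomial_add hM, opMonomial_single, Module.End.mul_apply]
      exact LinearMap.congr_fun (Commute.opMonomial_right (hM j) k).eq.symm (h v)) F

end Evaluation

/-- The `ℂ[λ, μ]`-linear extension `Σ_e x^e w_e ↦ Σ_e x^e g(w_e)` of a map on coefficients;
`evR` and `evL` are of this form. -/
def coeffLift (g : R →ₗ[ℂ] BP r R) : Module.End ℂ (BP r R) :=
  Finsupp.lsum ℂ fun e => bShift r R e ∘ₗ g

theorem coeffLift_add (g g' : R →ₗ[ℂ] BP r R) :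
    coeffLift (g + g') = coeffLift g + coeffLift g' := by
  simp only [coeffLift, LinearMap.comp_add]
  exact map_add (Finsupp.lsum ℂ) _ _

theorem coeffLift_single (g : R →ₗ[ℂ] BP r R) (e : (Fin r ⊕ Fin r) →₀ ℕ) (v : R) :
    coeffLift g (Finsupp.single e v) = bShift r R e (g v) := by
  simp [coeffLift]

theorem coeffLift_comp_lsingle_zero (g : R →ₗ[ℂ] BP r R) :
    coeffLift g ∘ₗ Finsupp.lsingle 0 = g :=
  LinearMap.ext fun v => by
    rw [LinearMap.comp_apply, Finsupp.lsingle_apply, coeffLift_single, bShift_zero,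
      Module.End.one_apply]

theorem semiconj_coeffLift_bShift (g : R →ₗ[ℂ] BP r R) (e : (Fin r ⊕ Fin r) →₀ ℕ) :
    Function.Semiconj (coeffLift g) (bShift r R e) (bShift r R e) := fun G =>
  LinearMap.congr_fun (f := coeffLift g ∘ₗ bShift r R e) (g := bShift r R e ∘ₗ coeffLift g)
    (Finsupp.lhom_ext fun d v => by
      simp only [LinearMap.comp_apply, bShift_single, coeffLift_single, bShift_add,
        Module.End.mul_apply]) G

theorem coeffLift_ev (g : R →ₗ[ℂ] BP r R) {M M' : Fin r → Module.End ℂ (BP r R)}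
    (hΦ : ∀ i, Function.Semiconj (coeffLift g) (M i) (M' i)) (F : VP r R) :
    coeffLift g (ev r R M F) = evalAt g M' F := by
  rw [ev_eq_evalAt, map_evalAt _ hΦ, coeffLift_comp_lsingle_zero]

theorem coeffLift_ev_FL (g : R →ₗ[ℂ] BP r R) (F : VP r R) :
    coeffLift g (ev r R (FL r R) F) = evalAt g (FL r R) F :=
  coeffLift_ev g (fun _ => semiconj_coeffLift_bShift g _) F

theorem coeffLift_ev_FM (g : R →ₗ[ℂ] BP r R) (F : VP r R) :
    coeffLift g (ev r R (FM r R) F) = evalAt g (FM r R) F :=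
  coeffLift_ev g (fun _ => semiconj_coeffLift_bShift g _) F

section Products

variable {f : R → R → VP r R}

def Bilin.toLin₂ (hf : Bilin r R f) : R →ₗ[ℂ] R →ₗ[ℂ] VP r R :=
  LinearMap.mk₂ ℂ f hf.1 hf.2.2.1 hf.2.1 hf.2.2.2

/-- `w ↦ a_λ w` with `λ` evaluated at `S`. -/
def Bilin.evRight (hf : Bilin r R f) (S : Fin r → Module.End ℂ (BP r R)) (a : R) :
    R →ₗ[ℂ] BP r R :=
  evalAt (Finsupp.lsingle 0) S ∘ₗ hf.toLin₂ a

/-- `w ↦ w_λ c` with `λ` evaluated at `S`. -/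
def Bilin.evLeft (hf : Bilin r R f) (S : Fin r → Module.End ℂ (BP r R)) (c : R) :
    R →ₗ[ℂ] BP r R :=
  evalAt (Finsupp.lsingle 0) S ∘ₗ hf.toLin₂.flip c

theorem Bilin.evRight_apply (hf : Bilin r R f) (S : Fin r → Module.End ℂ (BP r R)) (a w : R) :
    hf.evRight S a w = ev r R S (f a w) := rfl

theorem Bilin.evLeft_apply (hf : Bilin r R f) (S : Fin r → Module.End ℂ (BP r R)) (c w : R) :
    hf.evLeft S c w = ev r R S (f w c) := rfl

theorem Bilin.evR_eq_coeffLift (hf : Bilin r R f) (S : Fin r → Module.End ℂ (BP r R)) (a : R)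
    (G : BP r R) :
    evR r R f S a G = coeffLift (hf.evRight S a) G := rfl

theorem Bilin.evL_eq_coeffLift (hf : Bilin r R f) (S : Fin r → Module.End ℂ (BP r R)) (c : R)
    (F : BP r R) :
    evL r R f S F c = coeffLift (hf.evLeft S c) F := rfl

theorem Bilin.evR_add (hf : Bilin r R f) (S : Fin r → Module.End ℂ (BP r R)) (a : R)
    (G G' : BP r R) :
    evR r R f S a (G + G') = evR r R f S a G + evR r R f S a G' :=
  map_add (coeffLift (hf.evRight S a)) G G'

theorem Bilin.evL_add_right (hf : Bilin r R f) (S : Fin r → Module.End ℂ (BP r R)) (F : BP r R)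
    (c c' : R) :
    evL r R f S F (c + c') = evL r R f S F c + evL r R f S F c' := by
  simp only [hf.evL_eq_coeffLift, Bilin.evLeft, map_add, LinearMap.comp_add, coeffLift_add,
    LinearMap.add_apply]

theorem Bilin.evR_ev_FL (hf : Bilin r R f) (S : Fin r → Module.End ℂ (BP r R)) (a : R)
    (F : VP r R) :
    evR r R f S a (ev r R (FL r R) F) = evalAt (hf.evRight S a) (FL r R) F :=
  (hf.evR_eq_coeffLift S a _).trans (coeffLift_ev_FL _ F)

theorem Bilin.evR_ev_FM (hf : Bilin r R f) (S : Fin r → Module.End ℂ (BP r R)) (a : R)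
    (F : VP r R) :
    evR r R f S a (ev r R (FM r R) F) = evalAt (hf.evRight S a) (FM r R) F :=
  (hf.evR_eq_coeffLift S a _).trans (coeffLift_ev_FM _ F)

theorem Bilin.evL_ev_FL (hf : Bilin r R f) (S : Fin r → Module.End ℂ (BP r R)) (c : R)
    (F : VP r R) :
    evL r R f S (ev r R (FL r R) F) c = evalAt (hf.evLeft S c) (FL r R) F :=
  (hf.evL_eq_coeffLift S c _).trans (coeffLift_ev_FL _ F)

end Products

section Compatibility

variable {G : ZMod 2 → Submodule ℂ R} {p q : R → R → VP r R}

variable (G p q) in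
/-- The compatibility of the right Novikov `λ`-product `p` with the Lie `λ`-bracket `q`:
`[a_λ (b ∘_μ c)] + a ∘_λ [b_μ c] − [a_λ b] ∘_{λ+μ} c
  − (−1)^{αβ}([b_μ (a ∘_λ c)] + b ∘_μ [a_λ c]) = 0`. -/
def NovLieCompat : Prop :=
  ∀ (α β : ZMod 2) (a b : R), a ∈ G α → b ∈ G β → ∀ c : R,
    evR r R q (FL r R) a (ev r R (FM r R) (p b c)) +
    evR r R p (FL r R) a (ev r R (FM r R) (q b c)) -
    evL r R p (FLM r R) (ev r R (FL r R) (q a b)) c -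
    sgn α β • (evR r R q (FM r R) b (ev r R (FL r R) (p a c)) +
      evR r R p (FM r R) b (ev r R (FL r R) (q a c))) = 0

theorem NovLieCompat.evalAt_form (h : NovLieCompat G p q) (hp : Bilin r R p)
    (hq : Bilin r R q) {α β : ZMod 2} {a b : R} (ha : a ∈ G α) (hb : b ∈ G β) (c : R) :
    evalAt (hq.evRight (FL r R) a) (FM r R) (p b c) +
      evalAt (hp.evRight (FL r R) a) (FM r R) (q b c) -
      evalAt (hp.evLeft (FLM r R) c) (FL r R) (q a b) -
      sgn α β • (evalAt (hq.evRight (FM r R) b) (FL r R) (p a c) +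
        evalAt (hp.evRight (FM r R) b) (FL r R) (q a c)) = 0 := by
  simpa only [hp.evR_ev_FM, hq.evR_ev_FM, hp.evR_ev_FL, hq.evR_ev_FL, hp.evL_ev_FL]
    using h α β a b ha hb c

end Compatibility

section Substitution

variable (L M : Fin r → Module.End ℂ (BP r R))

def substOp (e : (Fin r ⊕ Fin r) →₀ ℕ) : Module.End ℂ (BP r R) :=
  opMonomial L (fun i => e (Sum.inl i)) * opMonomial M (fun i => e (Sum.inr i))

/-- The substitution `λ ↦ L`, `μ ↦ M` in `Σ_e λ^{e ∘ inl} μ^{e ∘ inr} v_e`. -/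
def subst : Module.End ℂ (BP r R) :=
  Finsupp.lsum ℂ fun e => substOp L M e ∘ₗ Finsupp.lsingle 0

variable {L M}

theorem subst_single (e : (Fin r ⊕ Fin r) →₀ ℕ) (v : R) :
    subst L M (Finsupp.single e v) = substOp L M e (Finsupp.single 0 v) := by
  simp [subst]

theorem subst_comp_lsingle_zero : subst L M ∘ₗ Finsupp.lsingle 0 = Finsupp.lsingle 0 :=
  LinearMap.ext fun v => by
    simp only [LinearMap.comp_apply, Finsupp.lsingle_apply, subst_single, substOp,
      Finsupp.coe_zero, Pi.zero_apply]
    rw [← Pi.zero_def, opMonomial_zero, opMonomial_zero, mul_one, Module.End.one_apply]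

theorem substOp_single_inl (j : Fin r) :
    substOp L M (Finsupp.single (Sum.inl j) 1) = L j := by
  have hL : (fun i => (Finsupp.single (Sum.inl j) 1 : (Fin r ⊕ Fin r) →₀ ℕ) (Sum.inl i)) =
      Pi.single j 1 := by
    ext i
    simp [Finsupp.single_apply, Pi.single_apply, eq_comm]
  have hM : (fun i => (Finsupp.single (Sum.inl j) 1 : (Fin r ⊕ Fin r) →₀ ℕ) (Sum.inr i)) =
      0 := by
    ext i
    simp
  rw [substOp, hL, hM, opMonomial_single, opMonomial_zero, mul_one]

theorem substOp_single_inr (j : Fin r) :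
    substOp L M (Finsupp.single (Sum.inr j) 1) = M j := by
  have hL : (fun i => (Finsupp.single (Sum.inr j) 1 : (Fin r ⊕ Fin r) →₀ ℕ) (Sum.inl i)) =
      0 := by
    ext i
    simp
  have hM : (fun i => (Finsupp.single (Sum.inr j) 1 : (Fin r ⊕ Fin r) →₀ ℕ) (Sum.inr i)) =
      Pi.single j 1 := by
    ext i
    simp [Finsupp.single_apply, Pi.single_apply, eq_comm]
  rw [substOp, hL, hM, opMonomial_single, opMonomial_zero, one_mul]

theorem subst_comp_ev {S S' : Fin r → Module.End ℂ (BP r R)}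
    (hΦ : ∀ i, Function.Semiconj (subst L M) (S i) (S' i)) :
    subst L M ∘ₗ evalAt (Finsupp.lsingle 0) S = evalAt (Finsupp.lsingle 0) S' :=
  LinearMap.ext fun F => by
    rw [LinearMap.comp_apply, map_evalAt _ hΦ, subst_comp_lsingle_zero]

theorem Bilin.subst_comp_evRight {f : R → R → VP r R} (hf : Bilin r R f)
    {S S' : Fin r → Module.End ℂ (BP r R)}
    (hΦ : ∀ i, Function.Semiconj (subst L M) (S i) (S' i)) (x : R) :
    subst L M ∘ₗ hf.evRight S x = hf.evRight S' x := by
  rw [Bilin.evRight, Bilin.evRight, ← LinearMap.comp_assoc, subst_comp_ev hΦ]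

theorem Bilin.subst_comp_evLeft {f : R → R → VP r R} (hf : Bilin r R f)
    {S S' : Fin r → Module.End ℂ (BP r R)}
    (hΦ : ∀ i, Function.Semiconj (subst L M) (S i) (S' i)) (x : R) :
    subst L M ∘ₗ hf.evLeft S x = hf.evLeft S' x := by
  rw [Bilin.evLeft, Bilin.evLeft, ← LinearMap.comp_assoc, subst_comp_ev hΦ]

end Substitution

variable [Module (MvPolynomial (Fin r) ℂ) R] [IsScalarTower ℂ (MvPolynomial (Fin r) ℂ) R]

theorem bT_single (i : Fin r) (d : (Fin r ⊕ Fin r) →₀ ℕ) (v : R) :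
    bT r R i (Finsupp.single d v) = Finsupp.single d ((X i : MvPolynomial (Fin r) ℂ) • v) := by
  simp [bT, tAct, Finsupp.mapRange_single]

theorem lsingle_smul_X (j : Fin r) (v : R) :
    Finsupp.lsingle (R := ℂ) (M := R) (0 : (Fin r ⊕ Fin r) →₀ ℕ)
      ((X j : MvPolynomial (Fin r) ℂ) • v) = bT r R j (Finsupp.lsingle (R := ℂ) 0 v) :=
  (bT_single j 0 v).symm

theorem commute_bT_bT (i j : Fin r) : Commute (bT r R i) (bT r R j) :=
  Finsupp.lhom_ext fun d v => by
    simp only [Module.End.mul_apply, bT_single, smul_smul, mul_comm]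

theorem commute_bShift_bT (e : (Fin r ⊕ Fin r) →₀ ℕ) (i : Fin r) :
    Commute (bShift r R e) (bT r R i) :=
  Finsupp.lhom_ext fun d v => by
    simp only [Module.End.mul_apply, bShift_single, bT_single]

variable (r R) in
def shiftTOps : AddSubgroup (Module.End ℂ (BP r R)) :=
  AddSubgroup.closure (Set.range (bShift r R) ∪ Set.range (bT r R))

theorem commute_of_mem_shiftTOps {f g : Module.End ℂ (BP r R)} (hf : f ∈ shiftTOps r R)
    (hg : g ∈ shiftTOps r R) : Commute f g := by
  induction hf using AddSubgroup.closure_induction with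
  | mem x hx =>
    induction hg using AddSubgroup.closure_induction with
    | mem y hy =>
      rcases hx with ⟨e, rfl⟩ | ⟨i, rfl⟩ <;> rcases hy with ⟨e', rfl⟩ | ⟨j, rfl⟩
      · exact commute_bShift_bShift e e'
      · exact commute_bShift_bT e j
      · exact (commute_bShift_bT e' i).symm
      · exact commute_bT_bT i j
    | zero => exact Commute.zero_right _
    | add y z _ _ hy hz => exact hy.add_right hz
    | neg y _ hy => exact hy.neg_right
  | zero => exact Commute.zero_left _
  | add y z _ _ hy hz => exact hy.add_left hz
  | neg y _ hy => exact hy.neg_left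

theorem bShift_mem_shiftTOps (e : (Fin r ⊕ Fin r) →₀ ℕ) : bShift r R e ∈ shiftTOps r R :=
  AddSubgroup.subset_closure (Or.inl ⟨e, rfl⟩)

theorem bT_mem_shiftTOps (i : Fin r) : bT r R i ∈ shiftTOps r R :=
  AddSubgroup.subset_closure (Or.inr ⟨i, rfl⟩)

theorem FL_mem_shiftTOps (i : Fin r) : FL r R i ∈ shiftTOps r R := bShift_mem_shiftTOps _

theorem FM_mem_shiftTOps (i : Fin r) : FM r R i ∈ shiftTOps r R := bShift_mem_shiftTOps _

theorem FLM_mem_shiftTOps (i : Fin r) : FLM r R i ∈ shiftTOps r R :=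
  add_mem (bShift_mem_shiftTOps _) (bShift_mem_shiftTOps _)

theorem FNLM_mem_shiftTOps (i : Fin r) : FNLM r R i ∈ shiftTOps r R :=
  sub_mem (sub_mem (neg_mem (bShift_mem_shiftTOps _)) (bShift_mem_shiftTOps _))
    (bT_mem_shiftTOps i)

section Evaluation

variable {E : Type*} [AddCommGroup E] [Module ℂ E] {h : R →ₗ[ℂ] E}
  {M : Fin r → Module.End ℂ E}

theorem vNeg_eq_evalAt (F : VP r R) :
    vNeg r R F = evalAt (Finsupp.lsingle 0) (fun i => -vLam r R i - vT r R i) F := rfl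

theorem semiconj_evalAt_vT {j : Fin r} {τ : Module.End ℂ E} (hτ : ∀ i, Commute τ (M i))
    (hh : ∀ v, h ((X j : MvPolynomial (Fin r) ℂ) • v) = τ (h v)) :
    Function.Semiconj (evalAt h M) (vT r R j) τ := fun F =>
  LinearMap.congr_fun (f := evalAt h M ∘ₗ vT r R j) (g := τ ∘ₗ evalAt h M)
    (Finsupp.lhom_ext fun k v => by
      simp only [LinearMap.comp_apply, vT, tAct, Finsupp.mapRange.linearMap_apply,
        Finsupp.mapRange_single, LinearMap.coe_mk, AddHom.coe_mk, evalAt_single, hh]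
      exact (LinearMap.congr_fun (Commute.opMonomial_right hτ k).eq (h v)).symm) F

theorem evalAt_vNeg (hM : ∀ i j, Commute (M i) (M j)) {τ : Fin r → Module.End ℂ E}
    (hτ : ∀ i j, Commute (τ i) (M j))
    (hh : ∀ j v, h ((X j : MvPolynomial (Fin r) ℂ) • v) = τ j (h v)) (F : VP r R) :
    evalAt h M (vNeg r R F) = evalAt h (fun i => -M i - τ i) F := by
  have hΦ : ∀ j, Function.Semiconj (evalAt h M) ⇑(-vLam r R j - vT r R j) ⇑(-M j - τ j) :=
    fun j G => by
      simp only [LinearMap.sub_apply, LinearMap.neg_apply, map_sub, map_neg,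
        semiconj_evalAt_vLam hM j G, semiconj_evalAt_vT (hτ j) (hh j) G]
  rw [vNeg_eq_evalAt, map_evalAt _ hΦ, evalAt_comp_lsingle_zero]

end Evaluation

theorem semiconj_ev_vT {S : Fin r → Module.End ℂ (BP r R)} (hS : ∀ i, S i ∈ shiftTOps r R)
    (j : Fin r) : Function.Semiconj (evalAt (Finsupp.lsingle 0) S) (vT r R j) (bT r R j) :=
  semiconj_evalAt_vT (fun i => commute_of_mem_shiftTOps (bT_mem_shiftTOps j) (hS i))
    (lsingle_smul_X j)

theorem ev_vNeg {S : Fin r → Module.End ℂ (BP r R)} (hS : ∀ i, S i ∈ shiftTOps r R)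
    (F : VP r R) : ev r R S (vNeg r R F) = ev r R (fun i => -S i - bT r R i) F :=
  evalAt_vNeg (h := Finsupp.lsingle 0) (fun i j => commute_of_mem_shiftTOps (hS i) (hS j))
    (fun i j => commute_of_mem_shiftTOps (bT_mem_shiftTOps i) (hS j)) lsingle_smul_X F

theorem semiconj_coeffLift_bT {g : R →ₗ[ℂ] BP r R} {j : Fin r} {τ : Module.End ℂ (BP r R)}
    (hτ : τ ∈ shiftTOps r R)
    (hg : ∀ v, g ((X j : MvPolynomial (Fin r) ℂ) • v) = τ (g v)) :
    Function.Semiconj (coeffLift g) (bT r R j) τ := fun G =>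
  LinearMap.congr_fun (f := coeffLift g ∘ₗ bT r R j) (g := τ ∘ₗ coeffLift g)
    (Finsupp.lhom_ext fun d v => by
      simp only [LinearMap.comp_apply, bT_single, coeffLift_single, hg]
      exact LinearMap.congr_fun
        (commute_of_mem_shiftTOps (bShift_mem_shiftTOps d) hτ).eq (g v)) G

theorem semiconj_coeffLift_FNL {g : R →ₗ[ℂ] BP r R} {j : Fin r} {τ : Module.End ℂ (BP r R)}
    (hτ : τ ∈ shiftTOps r R)
    (hg : ∀ v, g ((X j : MvPolynomial (Fin r) ℂ) • v) = τ (g v)) :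
    Function.Semiconj (coeffLift g) (FNL r R j) (-bLam r R j - τ) := fun G => by
  simp only [FNL, LinearMap.sub_apply, LinearMap.neg_apply, map_sub, map_neg, bLam,
    semiconj_coeffLift_bShift g _ G, semiconj_coeffLift_bT hτ hg G]
  rfl

section Sesq

variable {f : R → R → VP r R} {hf : Bilin r R f} {S : Fin r → Module.End ℂ (BP r R)}

theorem Sesq.evRight_smul_X (hsq : Sesq r R f) (hS : ∀ i, S i ∈ shiftTOps r R) (a : R)
    (j : Fin r) (v : R) :
    hf.evRight S a ((X j : MvPolynomial (Fin r) ℂ) • v) =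
      (bT r R j + S j) (hf.evRight S a v) := by
  have hM : ∀ i j, Commute (S i) (S j) := fun i j => commute_of_mem_shiftTOps (hS i) (hS j)
  simp only [Bilin.evRight, LinearMap.comp_apply, Bilin.toLin₂, LinearMap.mk₂_apply,
    (hsq j a v).2, LinearMap.add_apply, map_add, semiconj_evalAt_vLam hM j (f a v),
    semiconj_ev_vT hS j (f a v)]

theorem Sesq.evLeft_smul_X (hsq : Sesq r R f) (hS : ∀ i, S i ∈ shiftTOps r R) (c : R)
    (j : Fin r) (v : R) :
    hf.evLeft S c ((X j : MvPolynomial (Fin r) ℂ) • v) = (-S j) (hf.evLeft S c v) := by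
  have hM : ∀ i j, Commute (S i) (S j) := fun i j => commute_of_mem_shiftTOps (hS i) (hS j)
  simp only [Bilin.evLeft, LinearMap.comp_apply, LinearMap.flip_apply, Bilin.toLin₂,
    LinearMap.mk₂_apply, (hsq j v c).1, LinearMap.neg_apply, map_neg,
    semiconj_evalAt_vLam hM j (f v c)]

theorem Sesq.evL_ev_FNL (hsq : Sesq r R f) (c : R) (F : VP r R) :
    evL r R f (FLM r R) (ev r R (FNL r R) F) c = evalAt (hf.evLeft (FLM r R) c) (FM r R) F := by
  refine (hf.evL_eq_coeffLift _ _ _).trans (coeffLift_ev _ (fun j => ?_) F)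
  have hFM : -bLam r R j - -FLM r R j = FM r R j := by
    simp only [FLM, FM]
    abel
  rw [← hFM]
  exact semiconj_coeffLift_FNL (neg_mem (FLM_mem_shiftTOps j))
    (hsq.evLeft_smul_X FLM_mem_shiftTOps c j)

theorem Sesq.evR_ev_FNL (hsq : Sesq r R f) (a : R) (F : VP r R) :
    evR r R f (FM r R) a (ev r R (FNL r R) F) =
      evalAt (hf.evRight (FM r R) a) (FNLM r R) F := by
  refine (hf.evR_eq_coeffLift _ _ _).trans (coeffLift_ev _ (fun j => ?_) F)
  have hFNLM : -bLam r R j - (bT r R j + FM r R j) = FNLM r R j := by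
    simp only [FNLM, FM]
    abel
  rw [← hFNLM]
  exact semiconj_coeffLift_FNL (add_mem (bT_mem_shiftTOps j) (FM_mem_shiftTOps j))
    (hsq.evRight_smul_X FM_mem_shiftTOps a j)

end Sesq

section Substitution

variable {L M : Fin r → Module.End ℂ (BP r R)}

theorem substOp_add (hL : ∀ i, L i ∈ shiftTOps r R) (hM : ∀ i, M i ∈ shiftTOps r R)
    (e e' : (Fin r ⊕ Fin r) →₀ ℕ) :
    substOp L M (e + e') = substOp L M e * substOp L M e' := by
  have hLL : ∀ i j, Commute (L i) (L j) := fun i j => commute_of_mem_shiftTOps (hL i) (hL j)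
  have hMM : ∀ i j, Commute (M i) (M j) := fun i j => commute_of_mem_shiftTOps (hM i) (hM j)
  have hLM : Commute (opMonomial L fun i => e' (Sum.inl i))
      (opMonomial M fun i => e (Sum.inr i)) :=
    Commute.opMonomial_right (fun i => (Commute.opMonomial_right
      (fun j => commute_of_mem_shiftTOps (hM i) (hL j)) _).symm) _
  simp only [substOp, Finsupp.coe_add, Pi.add_apply]
  rw [show (fun i => e (Sum.inl i) + e' (Sum.inl i)) =
      (fun i => e (Sum.inl i)) + fun i => e' (Sum.inl i) from rfl,
    show (fun i => e (Sum.inr i) + e' (Sum.inr i)) =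
      (fun i => e (Sum.inr i)) + fun i => e' (Sum.inr i) from rfl,
    opMonomial_add hLL, opMonomial_add hMM, hLM.mul_mul_mul_comm]

theorem semiconj_subst_bShift (hL : ∀ i, L i ∈ shiftTOps r R)
    (hM : ∀ i, M i ∈ shiftTOps r R)
    (e : (Fin r ⊕ Fin r) →₀ ℕ) :
    Function.Semiconj (subst L M) (bShift r R e) (substOp L M e) := fun G =>
  LinearMap.congr_fun (f := subst L M ∘ₗ bShift r R e) (g := substOp L M e ∘ₗ subst L M)
    (Finsupp.lhom_ext fun d v => by
      simp only [LinearMap.comp_apply, bShift_single, subst_single, add_comm d,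
        substOp_add hL hM, Module.End.mul_apply]) G

end Substitution

theorem semiconj_subst_FL (i : Fin r) :
    Function.Semiconj (subst (FM r R) (FNLM r R)) (FL r R i) (FM r R i) := by
  rw [← substOp_single_inl (L := FM r R) (M := FNLM r R) i]
  exact semiconj_subst_bShift FM_mem_shiftTOps FNLM_mem_shiftTOps _

theorem semiconj_subst_FM (i : Fin r) :
    Function.Semiconj (subst (FM r R) (FNLM r R)) (FM r R i) (FNLM r R i) := by
  rw [← substOp_single_inr (L := FM r R) (M := FNLM r R) i]
  exact semiconj_subst_bShift FM_mem_shiftTOps FNLM_mem_shiftTOps _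

theorem semiconj_subst_FLM (i : Fin r) :
    Function.Semiconj (subst (FM r R) (FNLM r R)) (FLM r R i) (FNL r R i) := fun G => by
  have h : FM r R i + FNLM r R i = FNL r R i := by
    simp only [FM, FNLM, FNL]
    abel
  simp only [FLM, LinearMap.add_apply, map_add]
  rw [← h, LinearMap.add_apply, ← semiconj_subst_FL i G, ← semiconj_subst_FM i G]
  rfl

section Conformal

variable {G : ZMod 2 → Submodule ℂ R} {p q s : R → R → VP r R}

theorem Skew.ev_swap (hskew : Skew r R G q) {S : Fin r → Module.End ℂ (BP r R)}
    (hS : ∀ i, S i ∈ shiftTOps r R) {α β : ZMod 2} {a b : R} (ha : a ∈ G α)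
    (hb : b ∈ G β) :
    ev r R S (q a b) = -(sgn α β • ev r R (fun i => -S i - bT r R i) (q b a)) := by
  rw [hskew α β a b ha hb, ev_eq_evalAt, map_neg, map_zsmul, ← ev_eq_evalAt, ev_vNeg hS]

theorem Skew.evalAt_swap (hskew : Skew r R G q) {f : R → R → VP r R} (hf : Bilin r R f)
    (hsq : Sesq r R f) {S M M' : Fin r → Module.End ℂ (BP r R)}
    (hS : ∀ i, S i ∈ shiftTOps r R) (hM : ∀ i, M i ∈ shiftTOps r R)
    (hM' : ∀ i, -M i - (bT r R i + S i) = M' i) (x : R)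
    {α β : ZMod 2} {a b : R} (ha : a ∈ G α) (hb : b ∈ G β) :
    evalAt (hf.evRight S x) M (q a b) = -(sgn α β • evalAt (hf.evRight S x) M' (q b a)) := by
  rw [hskew α β a b ha hb, map_neg, map_zsmul,
    evalAt_vNeg (fun i j => commute_of_mem_shiftTOps (hM i) (hM j))
      (fun i j => commute_of_mem_shiftTOps (add_mem (bT_mem_shiftTOps i) (hS i)) (hM j))
      (hsq.evRight_smul_X hS x), funext hM']

variable (G p s) in
/-- `s` is `a ∗_λ b = a ∘_λ b + (−1)^{αβ} b ∘_{−λ−T} a`. -/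
def IsSymmetrized : Prop :=
  ∀ (α β : ZMod 2) (a b : R), a ∈ G α → b ∈ G β →
    s a b = p a b + sgn α β • vNeg r R (p b a)

/-- The compatibility at `(b, c, a)`, after the substitution `λ ↦ μ, μ ↦ −λ−μ−T` and
skew-symmetry of the bracket have brought its terms into the shape of those at `(a, b, c)`. -/
theorem NovLieCompat.rotate (h : NovLieCompat G p q) (hp : Bilin r R p) (hpS : Sesq r R p)
    (hpP : ParityPres r R G p) (hq : Bilin r R q) (hskew : Skew r R G q)
    {α β γ : ZMod 2} {a b c : R} (ha : a ∈ G α) (hb : b ∈ G β) (hc : c ∈ G γ) :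
    evalAt (hq.evRight (FM r R) b) (FNLM r R) (p c a) -
      sgn γ α • evalAt (hp.evRight (FM r R) b) (FL r R) (q a c) -
      evalAt (hp.evLeft (FNL r R) a) (FM r R) (q b c) +
      (sgn β γ * sgn γ (β + α)) • evalAt (hq.evLeft (FLM r R) c) (FM r R) (p b a) +
      (sgn β γ * sgn β α) • evalAt (hp.evRight (FNLM r R) c) (FL r R) (q a b) = 0 := by
  have H := congrArg (subst (FM r R) (FNLM r R)) (h.evalAt_form hp hq hb hc a)
  simp only [map_add, map_sub, map_zsmul, map_zero,
    map_evalAt _ semiconj_subst_FL, map_evalAt _ semiconj_subst_FM,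
    hp.subst_comp_evRight semiconj_subst_FL, hq.subst_comp_evRight semiconj_subst_FL,
    hp.subst_comp_evRight semiconj_subst_FM, hq.subst_comp_evRight semiconj_subst_FM,
    hp.subst_comp_evLeft semiconj_subst_FLM] at H
  have hFL₁ : ∀ i, -FNLM r R i - (bT r R i + FM r R i) = FL r R i := fun i => by
    simp only [FNLM, FM, FL]
    abel
  have hFL₂ : ∀ i, -FM r R i - (bT r R i + FNLM r R i) = FL r R i := fun i => by
    simp only [FNLM, FM, FL]
    abel
  have hFLM : ∀ i, -FNLM r R i - bT r R i = FLM r R i := fun i => by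
    simp only [FNLM, FLM]
    abel
  have hqca := hskew.evalAt_swap hp hpS FM_mem_shiftTOps FNLM_mem_shiftTOps hFL₁ b hc ha
  have hqba := hskew.evalAt_swap hp hpS FNLM_mem_shiftTOps FM_mem_shiftTOps hFL₂ c hb ha
  have hpba : evalAt (hq.evRight (FNLM r R) c) (FM r R) (p b a) =
      (-sgn γ (β + α)) • evalAt (hq.evLeft (FLM r R) c) (FM r R) (p b a) := by
    rw [← evalAt_zsmul_left]
    refine evalAt_congr fun k => ?_
    rw [LinearMap.smul_apply, Bilin.evRight_apply, Bilin.evLeft_apply,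
      hskew.ev_swap FNLM_mem_shiftTOps hc (hpP β α b a hb ha k), funext hFLM, neg_smul]
  rw [hqca, hqba, hpba] at H
  linear_combination (norm := module) H

theorem IsSymmetrized.ev_eq (hsym : IsSymmetrized G p s) {S S' : Fin r → Module.End ℂ (BP r R)}
    (hS : ∀ i, S i ∈ shiftTOps r R) (hS' : ∀ i, -S i - bT r R i = S' i)
    {α β : ZMod 2} {a b : R} (ha : a ∈ G α) (hb : b ∈ G β) :
    ev r R S (s a b) = ev r R S (p a b) + sgn α β • ev r R S' (p b a) := by
  rw [hsym α β a b ha hb, ev_eq_evalAt, map_add, map_zsmul, ← ev_eq_evalAt, ← ev_eq_evalAt,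
    ev_vNeg hS, funext hS']

theorem IsSymmetrized.evalAt_evRight (hsym : IsSymmetrized G p s) (hs : Bilin r R s)
    (hp : Bilin r R p) {S S' : Fin r → Module.End ℂ (BP r R)}
    (hS : ∀ i, S i ∈ shiftTOps r R) (hS' : ∀ i, -S i - bT r R i = S' i)
    {α δ : ZMod 2} {a : R} (ha : a ∈ G α) {F : VP r R} (hF : ∀ k, F k ∈ G δ)
    (M : Fin r → Module.End ℂ (BP r R)) :
    evalAt (hs.evRight S a) M F =
      evalAt (hp.evRight S a) M F + sgn α δ • evalAt (hp.evLeft S' a) M F := by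
  rw [← evalAt_zsmul_left, ← evalAt_add_left]
  exact evalAt_congr fun k => hsym.ev_eq hS hS' ha (hF k)

theorem IsSymmetrized.evalAt_evLeft (hsym : IsSymmetrized G p s) (hs : Bilin r R s)
    (hp : Bilin r R p) {S S' : Fin r → Module.End ℂ (BP r R)}
    (hS : ∀ i, S i ∈ shiftTOps r R) (hS' : ∀ i, -S i - bT r R i = S' i)
    {γ δ : ZMod 2} {c : R} (hc : c ∈ G γ) {F : VP r R} (hF : ∀ k, F k ∈ G δ)
    (M : Fin r → Module.End ℂ (BP r R)) :
    evalAt (hs.evLeft S c) M F =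
      evalAt (hp.evLeft S c) M F + sgn δ γ • evalAt (hp.evRight S' c) M F := by
  rw [← evalAt_zsmul_left, ← evalAt_add_left]
  exact evalAt_congr fun k => hsym.ev_eq hS hS' (hF k) hc

theorem NovLieCompat.symmetrized_of_homogeneous (h : NovLieCompat G p q) (hp : Bilin r R p)
    (hpS : Sesq r R p) (hpP : ParityPres r R G p) (hq : Bilin r R q) (hqS : Sesq r R q)
    (hqP : ParityPres r R G q) (hskew : Skew r R G q) (hs : Bilin r R s)
    (hsym : IsSymmetrized G p s) {α β γ : ZMod 2} {a b c : R}
    (ha : a ∈ G α) (hb : b ∈ G β) (hc : c ∈ G γ) :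
    evR r R q (FL r R) a (ev r R (FM r R) (p b c)) +
      evR r R s (FL r R) a (ev r R (FM r R) (q b c)) +
      evL r R q (FLM r R) (ev r R (FL r R) (p a b)) c -
      evL r R q (FLM r R) (ev r R (FL r R) (s a b)) c -
      evL r R s (FLM r R) (ev r R (FL r R) (q a b)) c -
      sgn α β • evR r R q (FM r R) b (ev r R (FL r R) (s a c)) = 0 := by
  have hFNL : ∀ i, -FL r R i - bT r R i = FNL r R i := fun _ => rfl
  have hFNLM : ∀ i, -FLM r R i - bT r R i = FNLM r R i := fun i => by
    simp only [FNLM, FLM]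
    abel
  have hsab : evL r R q (FLM r R) (ev r R (FL r R) (s a b)) c =
      evalAt (hq.evLeft (FLM r R) c) (FL r R) (p a b) +
        sgn α β • evalAt (hq.evLeft (FLM r R) c) (FM r R) (p b a) := by
    rw [hsym.ev_eq FL_mem_shiftTOps hFNL ha hb, hq.evL_eq_coeffLift, map_add, map_zsmul,
      ← hq.evL_eq_coeffLift, ← hq.evL_eq_coeffLift, hq.evL_ev_FL, hqS.evL_ev_FNL]
  have hsac : evR r R q (FM r R) b (ev r R (FL r R) (s a c)) =
      evalAt (hq.evRight (FM r R) b) (FL r R) (p a c) +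
        sgn α γ • evalAt (hq.evRight (FM r R) b) (FNLM r R) (p c a) := by
    rw [hsym.ev_eq FL_mem_shiftTOps hFNL ha hc, hq.evR_eq_coeffLift, map_add, map_zsmul,
      ← hq.evR_eq_coeffLift, ← hq.evR_eq_coeffLift, hq.evR_ev_FL, hqS.evR_ev_FNL]
  rw [hq.evR_ev_FM, hs.evR_ev_FM,
    hsym.evalAt_evRight hs hp FL_mem_shiftTOps hFNL ha (hqP β γ b c hb hc),
    hq.evL_ev_FL, hsab, hs.evL_ev_FL,
    hsym.evalAt_evLeft hs hp FLM_mem_shiftTOps hFNLM hc (hqP α β a b ha hb), hsac,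
    sgn_add_right, sgn_add_left]
  have H₁ := h.evalAt_form hp hq ha hb c
  have H₂ := h.rotate hp hpS hpP hq hskew ha hb hc
  rw [sgn_comm γ α, sgn_comm β α, sgn_add_right, sgn_comm γ β, sgn_comm γ α] at H₂
  -- the coefficients left over from `H₁ - (−1)^{α(β+γ)} H₂` are multiples of `(sign)² - 1`
  linear_combination (norm := module) H₁ - (sgn α β * sgn α γ) • H₂ -
    (sgn α β * sgn_mul_self α γ) • evalAt (hp.evRight (FM r R) b) (FL r R) (q a c) +
    (sgn α β * sgn β γ ^ 2 * sgn_mul_self α γ + sgn α β * sgn_mul_self β γ) •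
      evalAt (hq.evLeft (FLM r R) c) (FM r R) (p b a) +
    (sgn α γ * sgn β γ * sgn_mul_self α β) •
      evalAt (hp.evRight (FNLM r R) c) (FL r R) (q a b)

end Conformal

end

/-- Let `R` carry both an `r`-dimensional right Novikov conformal
superalgebra `λ`-product `∘_λ` (denoted `p`) and an `r`-dimensional Lie conformal
superalgebra `λ`-bracket (denoted `q`) satisfying the compatibility
`[a_λ (b ∘_μ c)] + a ∘_λ [b_μ c] − [a_λ b] ∘_{λ+μ} c
  − (−1)^{αβ}([b_μ (a ∘_λ c)] + b ∘_μ [a_λ c]) = 0`.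
With `a ∗_λ b = a ∘_λ b + (−1)^{αβ} b ∘_{−λ−T} a` one has
`[a_λ (b ∘_μ c)] + a ∗_λ [b_μ c] + [(a ∘_λ b)_{λ+μ} c] − [(a ∗_λ b)_{λ+μ} c]
  − [a_λ b] ∗_{λ+μ} c − (−1)^{αβ} [b_μ (a ∗_λ c)] = 0`. -/
theorem statement_17 (r : ℕ) (R : Type*) [AddCommGroup R] [Module ℂ R]
    [Module (MvPolynomial (Fin r) ℂ) R] [IsScalarTower ℂ (MvPolynomial (Fin r) ℂ) R]
    (G : ZMod 2 → Submodule ℂ R) (hG : IsGraded r R G)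
    (p : R → R → VP r R) (hp : IsNovRight r R G p)
    (q : R → R → VP r R) (hq : IsLieConfSuper r R G q)
    (hcompat : ∀ (α β : ZMod 2) (a b : R), a ∈ G α → b ∈ G β → ∀ c : R,
      evR r R q (FL r R) a (ev r R (FM r R) (p b c)) +
      evR r R p (FL r R) a (ev r R (FM r R) (q b c)) -
      evL r R p (FLM r R) (ev r R (FL r R) (q a b)) c -
      sgn α β • (evR r R q (FM r R) b (ev r R (FL r R) (p a c)) +
        evR r R p (FM r R) b (ev r R (FL r R) (q a c))) = 0)
    (s : R → R → VP r R) (hs : Bilin r R s)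
    (hdef : ∀ (α β : ZMod 2) (a b : R), a ∈ G α → b ∈ G β →
      s a b = p a b + sgn α β • vNeg r R (p b a)) :
    ∀ (α β : ZMod 2) (a b : R), a ∈ G α → b ∈ G β → ∀ c : R,
      evR r R q (FL r R) a (ev r R (FM r R) (p b c)) +
      evR r R s (FL r R) a (ev r R (FM r R) (q b c)) +
      evL r R q (FLM r R) (ev r R (FL r R) (p a b)) c -
      evL r R q (FLM r R) (ev r R (FL r R) (s a b)) c -
      evL r R s (FLM r R) (ev r R (FL r R) (q a b)) c -
      sgn α β • evR r R q (FM r R) b (ev r R (FL r R) (s a c)) = 0 := by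
  obtain ⟨hpB, hpP, hpS, -, -⟩ := hp
  obtain ⟨hqB, hqP, hqS, hskew, -⟩ := hq
  intro α β a b ha hb
  refine apply_eq_zero_of_iSup_eq_top hG.1.submodule_iSup_eq_top (fun x y => ?_)
    (fun γ c hc => NovLieCompat.symmetrized_of_homogeneous hcompat hpB hpS hpP hqB hqS hqP
      hskew hs hdef ha hb hc)
  simp only [hpB.2.1, hqB.2.1, hs.2.1, ev_add, hqB.evR_add, hs.evR_add, hqB.evL_add_right,
    hs.evL_add_right, smul_add]
  abel

end CA
end

section
/- Let r = 2s with s ≥ 1 and let R = ℂ[T₁,…,T_r] L be the free ℂ[T₁,…,T_r]-module on one generator L. The λ-bracket determined on the generator by [L_λ L] = Σ_{i=1}^s (λ_{s+i} T_i L − λ_i T_{s+i} L), extended by conformal sesquilinearity, makes R an r-dimensional Lie conformal algebra. -/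
open Finsupp MvPolynomial
open scoped TensorProduct

namespace CA

/-!
The bracket `[a_λ b] = a(-λ) b(λ+T) P(λ,T)` is the only conformal sesquilinear one on the free
module `ℂ[T]·L` with `[L_λ L] = P`. Reading `λ`-brackets as polynomials in `λ, μ, T`, skew-symmetry
becomes `P(-λ-T, T) = -P(λ, T)` and the Jacobi identity becomes the polynomial identity
`P(μ, λ+T) P(λ, T) = P(λ, -λ-μ) P(λ+μ, T) + P(λ, μ+T) P(μ, T)`.
For the symplectic pairing `P(λ, T) = ω(λ, T)` both follow from bilinearity, `ω(x, x) = 0` and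
`ω(y, x) = -ω(x, y)`: writing `x = ω(λ, μ)`, `y = ω(λ, T)`, `z = ω(μ, T)`, each side of the
Jacobi identity equals `y z - x y`.
-/

noncomputable section

abbrev TPoly (r : ℕ) := MvPolynomial (Fin r) ℂ

section Encoding

variable {r : ℕ} {κ : Type*}

/-- `VP` and `BP` store a polynomial in the variables `κ` with coefficients in `ℂ[T]` as its
coefficient function. -/
def toMvPoly : ((κ →₀ ℕ) →₀ TPoly r) ≃ₗ[ℂ] MvPolynomial κ (TPoly r) :=
  (AddMonoidAlgebra.coeffLinearEquiv ℂ).symm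

lemma toMvPoly_single (k : κ →₀ ℕ) (v : TPoly r) :
    toMvPoly (Finsupp.single k v) = monomial k v := rfl

lemma toMvPoly_lmapDomain_add (e : κ →₀ ℕ) (F : (κ →₀ ℕ) →₀ TPoly r) :
    toMvPoly (Finsupp.lmapDomain (TPoly r) ℂ (· + e) F) = monomial e 1 * toMvPoly F := by
  induction F using Finsupp.induction_linear with
  | zero => simp
  | add F G hF hG => simp only [map_add, hF, hG, mul_add]
  | single k v => simp [toMvPoly_single, monomial_mul, add_comm]

lemma toMvPoly_mapRange_tAct (i : Fin r) (F : (κ →₀ ℕ) →₀ TPoly r) :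
    toMvPoly (Finsupp.mapRange.linearMap (tAct r (TPoly r) i) F) = C (X i) * toMvPoly F := by
  induction F using Finsupp.induction_linear with
  | zero => simp
  | add F G hF hG => simp only [map_add, hF, hG, mul_add]
  | single k v =>
    rw [mapRange.linearMap_apply, mapRange_single, toMvPoly_single, toMvPoly_single,
      C_mul_monomial]
    rfl

lemma toMvPoly_sum_prod_pow {sop : Fin r → Module.End ℂ ((κ →₀ ℕ) →₀ TPoly r)}
    {t : Fin r → MvPolynomial κ (TPoly r)} (h : ∀ i G, toMvPoly (sop i G) = t i * toMvPoly G)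
    (F : (Fin r →₀ ℕ) →₀ TPoly r) :
    toMvPoly (F.sum fun k v => (List.ofFn fun i => sop i ^ k i).prod (Finsupp.single 0 v)) =
      bind₁ t (toMvPoly F) := by
  have hconj (k : Fin r →₀ ℕ) : toMvPoly.conjRingEquiv (List.ofFn fun i => sop i ^ k i).prod =
      Algebra.lmul ℂ _ (∏ i, t i ^ k i) := by
    have hsop : (toMvPoly.conjRingEquiv ∘ fun i => sop i ^ k i) =
        Algebra.lmul ℂ _ ∘ fun i => t i ^ k i := funext fun i => by
      simp only [Function.comp_apply, map_pow]
      exact congrArg (· ^ k i) (LinearMap.ext fun p => by simpa using h i (toMvPoly.symm p))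
    rw [map_list_prod, List.map_ofFn, hsop, ← List.map_ofFn, ← map_list_prod, Fin.prod_ofFn]
  rw [map_finsuppSum, Finsupp.sum]
  conv_rhs => rw [← Finsupp.sum_single F, map_finsuppSum, map_finsuppSum, Finsupp.sum]
  refine Finset.sum_congr rfl fun k _ => ?_
  have hk := LinearMap.congr_fun (hconj k) (toMvPoly (Finsupp.single 0 (F k)))
  rw [LinearEquiv.conjRingEquiv_apply_apply, LinearEquiv.symm_apply_apply] at hk
  rw [hk, toMvPoly_single, toMvPoly_single, ← aeval_eq_bind₁, aeval_monomial, Finsupp.prod_pow,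
    mul_comm]
  rfl

end Encoding

section Substitution

variable {r : ℕ} {κ : Type*} {S S' : Type*} [CommRing S] [CommRing S']

lemma ringHom_ext_lamT {φ ψ : MvPolynomial (Fin r) (TPoly r) →+* S}
    (hc : ∀ z : ℂ, φ (algebraMap ℂ _ z) = ψ (algebraMap ℂ _ z))
    (hT : ∀ j, φ (C (X j)) = ψ (C (X j))) (hX : ∀ j, φ (X j) = ψ (X j)) : φ = ψ := by
  refine MvPolynomial.ringHom_ext (fun a => ?_) hX
  show (φ.comp C) a = (ψ.comp C) a
  exact RingHom.congr_fun (MvPolynomial.ringHom_ext hc hT) a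

variable [Algebra ℂ S] [Algebra ℂ S']

/-- `P ↦ P(u, v)`, substituting `u` for the `λ`'s and `v` for the `T`'s. -/
def evalLamT (u v : Fin r → S) : MvPolynomial (Fin r) (TPoly r) →+* S :=
  eval₂Hom (aeval v : TPoly r →ₐ[ℂ] S).toRingHom u

@[simp]
lemma evalLamT_X (u v : Fin r → S) (j : Fin r) : evalLamT u v (X j) = u j := eval₂Hom_X' ..

@[simp]
lemma evalLamT_C (u v : Fin r → S) (a : TPoly r) : evalLamT u v (C a) = aeval v a :=
  eval₂Hom_C ..

@[simp]
lemma evalLamT_algebraMap (u v : Fin r → S) (z : ℂ) :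
    evalLamT u v (algebraMap ℂ _ z) = algebraMap ℂ S z := by
  rw [IsScalarTower.algebraMap_apply ℂ (TPoly r), algebraMap_eq, evalLamT_C, AlgHom.commutes]

lemma map_evalLamT (ψ : S →+* S') (hψ : ∀ z : ℂ, ψ (algebraMap ℂ S z) = algebraMap ℂ S' z)
    (u v : Fin r → S) (p : MvPolynomial (Fin r) (TPoly r)) :
    ψ (evalLamT u v p) = evalLamT (ψ ∘ u) (ψ ∘ v) p := by
  refine RingHom.congr_fun (ringHom_ext_lamT (φ := ψ.comp (evalLamT u v)) ?_ ?_ ?_) p <;>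
    simp [hψ]

def tVar (κ : Type*) : Fin r → MvPolynomial κ (TPoly r) := fun j => C (X j)

lemma bind₁_eq_evalLamT (t : Fin r → MvPolynomial κ (TPoly r))
    (p : MvPolynomial (Fin r) (TPoly r)) : bind₁ t p = evalLamT t (tVar κ) p := by
  refine RingHom.congr_fun (ringHom_ext_lamT (φ := (bind₁ t).toRingHom) ?_ ?_ ?_) p <;>
    simp [tVar]

/-- `a ↦ a(-λ)`. -/
def negLam : TPoly r →ₐ[ℂ] MvPolynomial (Fin r) (TPoly r) := aeval (-X)

/-- `b ↦ b(λ + T)`. -/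
def shiftLam : TPoly r →ₐ[ℂ] MvPolynomial (Fin r) (TPoly r) := aeval (X + tVar (Fin r))

lemma evalLamT_negLam (u v : Fin r → S) (a : TPoly r) :
    evalLamT u v (negLam a) = aeval (-u) a := by
  refine RingHom.congr_fun (MvPolynomial.ringHom_ext (f := (evalLamT u v).comp negLam.toRingHom)
    (g := (aeval (-u)).toRingHom) ?_ ?_) a <;> simp [negLam]

lemma evalLamT_shiftLam (u v : Fin r → S) (a : TPoly r) :
    evalLamT u v (shiftLam a) = aeval (u + v) a := by
  refine RingHom.congr_fun (MvPolynomial.ringHom_ext (f := (evalLamT u v).comp shiftLam.toRingHom)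
    (g := (aeval (u + v)).toRingHom) ?_ ?_) a <;> simp [shiftLam, tVar]

lemma bind₂_evalLamT (φ : TPoly r →ₐ[ℂ] MvPolynomial (Fin r) (TPoly r))
    (u : Fin r → MvPolynomial κ (TPoly r)) (f : Fin r → κ) (p : MvPolynomial (Fin r) (TPoly r)) :
    bind₂ ((evalLamT u (tVar κ)).comp φ.toRingHom) (evalLamT (X ∘ f) (tVar κ) p) =
      evalLamT (X ∘ f) (fun j => evalLamT u (tVar κ) (φ (X j))) p := by
  have hc (z : ℂ) : bind₂ ((evalLamT u (tVar κ)).comp φ.toRingHom) (algebraMap ℂ _ z) =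
      algebraMap ℂ (MvPolynomial κ (TPoly r)) z := by
    rw [IsScalarTower.algebraMap_apply ℂ (TPoly r), algebraMap_eq, bind₂_C_right]
    simp
  have hX : (⇑(bind₂ ((evalLamT u (tVar κ)).comp φ.toRingHom)) ∘ (X ∘ f)) = X ∘ f := by
    funext j
    simp only [Function.comp_apply, bind₂_X_right]
  have hT : (⇑(bind₂ ((evalLamT u (tVar κ)).comp φ.toRingHom)) ∘ tVar κ) =
      fun j => evalLamT u (tVar κ) (φ (X j)) := by
    funext j
    simp only [Function.comp_apply, tVar, bind₂_C_right]
    rfl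
  rw [map_evalLamT _ hc, hX, hT]

lemma bind₂_shiftLam_evalLamT (u : Fin r → MvPolynomial κ (TPoly r)) (f : Fin r → κ)
    (p : MvPolynomial (Fin r) (TPoly r)) :
    bind₂ ((evalLamT u (tVar κ)).comp shiftLam.toRingHom) (evalLamT (X ∘ f) (tVar κ) p) =
      evalLamT (X ∘ f) (u + tVar κ) p := by
  rw [bind₂_evalLamT]
  congr 2
  funext j
  simp [evalLamT_shiftLam]

lemma bind₂_negLam_evalLamT (u : Fin r → MvPolynomial κ (TPoly r)) (f : Fin r → κ)
    (p : MvPolynomial (Fin r) (TPoly r)) :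
    bind₂ ((evalLamT u (tVar κ)).comp negLam.toRingHom) (evalLamT (X ∘ f) (tVar κ) p) =
      evalLamT (X ∘ f) (-u) p := by
  rw [bind₂_evalLamT]
  congr 2
  funext j
  simp [evalLamT_negLam]

end Substitution

section FreeBracket

variable {r : ℕ}

/-- `[a_λ b] = a(-λ) b(λ+T) P(λ, T)`, with the generator `L` encoded as `1`. -/
def freeBracket (P : MvPolynomial (Fin r) (TPoly r)) (a b : TPoly r) : VP r (TPoly r) :=
  toMvPoly.symm (negLam a * shiftLam b * P)

variable (P : MvPolynomial (Fin r) (TPoly r))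

lemma toMvPoly_freeBracket (a b : TPoly r) :
    toMvPoly (freeBracket P a b) = negLam a * shiftLam b * P :=
  toMvPoly.apply_symm_apply _

lemma freeBracket_bilin : Bilin r (TPoly r) (freeBracket P) := by
  refine ⟨fun a b c => ?_, fun a b c => ?_, fun z a b => ?_, fun z a b => ?_⟩ <;>
    apply toMvPoly.injective <;>
    simp only [map_add, map_smul, toMvPoly_freeBracket, add_mul, mul_add, smul_mul_assoc,
      mul_smul_comm]

lemma toMvPoly_vLam (i : Fin r) (F : VP r (TPoly r)) :
    toMvPoly (vLam r (TPoly r) i F) = X i * toMvPoly F := by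
  rw [vLam, toMvPoly_lmapDomain_add, X]

lemma toMvPoly_vT (i : Fin r) (F : VP r (TPoly r)) :
    toMvPoly (vT r (TPoly r) i F) = C (X i) * toMvPoly F :=
  toMvPoly_mapRange_tAct i F

lemma freeBracket_sesq : Sesq r (TPoly r) (freeBracket P) := by
  refine fun i a b => ⟨toMvPoly.injective ?_, toMvPoly.injective ?_⟩
  · rw [LinearMap.neg_apply, map_neg, toMvPoly_vLam, toMvPoly_freeBracket, toMvPoly_freeBracket,
      smul_eq_mul, map_mul]
    simp only [negLam, aeval_X, Pi.neg_apply]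
    ring
  · rw [LinearMap.add_apply, map_add, toMvPoly_vLam, toMvPoly_vT, toMvPoly_freeBracket,
      toMvPoly_freeBracket, smul_eq_mul, map_mul]
    simp only [shiftLam, aeval_X, Pi.add_apply, tVar]
    ring

lemma toMvPoly_vNeg (F : VP r (TPoly r)) :
    toMvPoly (vNeg r (TPoly r) F) =
      evalLamT (-X - tVar (Fin r)) (tVar (Fin r)) (toMvPoly F) := by
  rw [vNeg, toMvPoly_sum_prod_pow (fun i G => ?_), bind₁_eq_evalLamT]
  rw [LinearMap.sub_apply, LinearMap.neg_apply, map_sub, map_neg, toMvPoly_vLam, toMvPoly_vT]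
  simp only [Pi.sub_apply, Pi.neg_apply, tVar]
  ring

lemma freeBracket_skew (hP : evalLamT (-X - tVar (Fin r)) (tVar (Fin r)) P = -P) :
    Skew' r (TPoly r) (freeBracket P) := by
  intro a b
  apply toMvPoly.injective
  rw [map_neg, toMvPoly_vNeg, toMvPoly_freeBracket, toMvPoly_freeBracket, map_mul, map_mul, hP,
    evalLamT_negLam, evalLamT_shiftLam, neg_sub, sub_neg_eq_add, add_comm, sub_add_cancel]
  change _ = -(shiftLam b * negLam a * -P)
  ring

variable {sop : Fin r → Module.End ℂ (BP r (TPoly r))}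
  {t : Fin r → MvPolynomial (Fin r ⊕ Fin r) (TPoly r)}

lemma toMvPoly_bShift (e : (Fin r ⊕ Fin r) →₀ ℕ) (F : BP r (TPoly r)) :
    toMvPoly (bShift r (TPoly r) e F) = monomial e 1 * toMvPoly F :=
  toMvPoly_lmapDomain_add e F

lemma toMvPoly_ev (h : ∀ i G, toMvPoly (sop i G) = t i * toMvPoly G) (F : VP r (TPoly r)) :
    toMvPoly (ev r (TPoly r) sop F) = evalLamT t (tVar _) (toMvPoly F) := by
  rw [ev, toMvPoly_sum_prod_pow h, bind₁_eq_evalLamT]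

lemma toMvPoly_evR (h : ∀ i G, toMvPoly (sop i G) = t i * toMvPoly G) (a : TPoly r)
    (G : BP r (TPoly r)) :
    toMvPoly (evR r (TPoly r) (freeBracket P) sop a G) =
      evalLamT t (tVar _) (negLam a * P) *
        bind₂ ((evalLamT t (tVar _)).comp shiftLam.toRingHom) (toMvPoly G) := by
  rw [evR, map_finsuppSum]
  conv_rhs => rw [← Finsupp.sum_single G, map_finsuppSum, map_finsuppSum, Finsupp.mul_sum]
  refine Finset.sum_congr rfl fun e _ => ?_
  beta_reduce
  rw [toMvPoly_bShift, toMvPoly_ev h, toMvPoly_single, bind₂_monomial, toMvPoly_freeBracket,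
    RingHom.comp_apply]
  simp only [map_mul, AlgHom.toRingHom_eq_coe, RingHom.coe_coe]
  ring

lemma toMvPoly_evL (h : ∀ i G, toMvPoly (sop i G) = t i * toMvPoly G) (b : TPoly r)
    (G : BP r (TPoly r)) :
    toMvPoly (evL r (TPoly r) (freeBracket P) sop G b) =
      evalLamT t (tVar _) (shiftLam b * P) *
        bind₂ ((evalLamT t (tVar _)).comp negLam.toRingHom) (toMvPoly G) := by
  rw [evL, map_finsuppSum]
  conv_rhs => rw [← Finsupp.sum_single G, map_finsuppSum, map_finsuppSum, Finsupp.mul_sum]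
  refine Finset.sum_congr rfl fun e _ => ?_
  beta_reduce
  rw [toMvPoly_bShift, toMvPoly_ev h, toMvPoly_single, bind₂_monomial, toMvPoly_freeBracket,
    RingHom.comp_apply]
  simp only [map_mul, AlgHom.toRingHom_eq_coe, RingHom.coe_coe]
  ring

abbrev lamVar (r : ℕ) : Fin r → MvPolynomial (Fin r ⊕ Fin r) (TPoly r) := X ∘ Sum.inl

abbrev muVar (r : ℕ) : Fin r → MvPolynomial (Fin r ⊕ Fin r) (TPoly r) := X ∘ Sum.inr

lemma toMvPoly_FL (i : Fin r) (G : BP r (TPoly r)) :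
    toMvPoly (FL r (TPoly r) i G) = lamVar r i * toMvPoly G := by
  rw [FL, bLam, toMvPoly_bShift]; rfl

lemma toMvPoly_FM (i : Fin r) (G : BP r (TPoly r)) :
    toMvPoly (FM r (TPoly r) i G) = muVar r i * toMvPoly G := by
  rw [FM, bMu, toMvPoly_bShift]; rfl

lemma toMvPoly_FLM (i : Fin r) (G : BP r (TPoly r)) :
    toMvPoly (FLM r (TPoly r) i G) = (lamVar r + muVar r) i * toMvPoly G := by
  rw [FLM, LinearMap.add_apply, map_add, ← FL, ← FM, toMvPoly_FL, toMvPoly_FM, Pi.add_apply,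
    add_mul]

lemma freeBracket_jacobi
    (hP : evalLamT (muVar r) (lamVar r + tVar _) P * evalLamT (lamVar r) (tVar _) P =
      evalLamT (lamVar r) (-(lamVar r + muVar r)) P * evalLamT (lamVar r + muVar r) (tVar _) P +
      evalLamT (lamVar r) (muVar r + tVar _) P * evalLamT (muVar r) (tVar _) P) :
    Jacobi' r (TPoly r) (freeBracket P) := by
  intro a b c
  apply toMvPoly.injective
  rw [map_add, toMvPoly_evR P toMvPoly_FL, toMvPoly_evL P toMvPoly_FLM,
    toMvPoly_evR P toMvPoly_FM, toMvPoly_ev toMvPoly_FM, toMvPoly_ev toMvPoly_FL,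
    toMvPoly_ev toMvPoly_FL, toMvPoly_freeBracket, toMvPoly_freeBracket, toMvPoly_freeBracket,
    bind₂_shiftLam_evalLamT, bind₂_negLam_evalLamT, bind₂_shiftLam_evalLamT]
  simp only [map_mul, evalLamT_negLam, evalLamT_shiftLam]
  have hc₁ : muVar r + (lamVar r + tVar _) = lamVar r + muVar r + tVar _ := by abel
  have hc₂ : lamVar r + (muVar r + tVar _) = lamVar r + muVar r + tVar _ := by abel
  have hb : lamVar r + -(lamVar r + muVar r) = -muVar r := by abel
  rw [hc₁, hc₂, hb]
  linear_combination (aeval (-lamVar r) a * aeval (-muVar r) b *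
    aeval (lamVar r + muVar r + tVar _) c) * hP

end FreeBracket

section Symplectic

variable (s : ℕ)

def sympForm {S : Type*} [CommRing S] : (Fin (2 * s) → S) →ₗ[S] (Fin (2 * s) → S) →ₗ[S] S :=
  LinearMap.mk₂ S
    (fun x y => ∑ i : Fin s, (x ⟨s + i, by omega⟩ * y ⟨i, by omega⟩ -
      x ⟨i, by omega⟩ * y ⟨s + i, by omega⟩))
    (fun _ _ _ => by
      simp only [Pi.add_apply, ← Finset.sum_add_distrib]
      exact Finset.sum_congr rfl fun _ _ => by ring)
    (fun _ _ _ => by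
      simp only [Pi.smul_apply, smul_eq_mul, Finset.mul_sum]
      exact Finset.sum_congr rfl fun _ _ => by ring)
    (fun _ _ _ => by
      simp only [Pi.add_apply, ← Finset.sum_add_distrib]
      exact Finset.sum_congr rfl fun _ _ => by ring)
    (fun _ _ _ => by
      simp only [Pi.smul_apply, smul_eq_mul, Finset.mul_sum]
      exact Finset.sum_congr rfl fun _ _ => by ring)

variable {S S' : Type*} [CommRing S] [CommRing S']

lemma sympForm_apply (x y : Fin (2 * s) → S) :
    sympForm s x y = ∑ i : Fin s, (x ⟨s + i, by omega⟩ * y ⟨i, by omega⟩ -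
      x ⟨i, by omega⟩ * y ⟨s + i, by omega⟩) := rfl

lemma sympForm_self (x : Fin (2 * s) → S) : sympForm s x x = 0 := by
  rw [sympForm_apply]
  exact Finset.sum_eq_zero fun _ _ => by ring

lemma sympForm_swap (x y : Fin (2 * s) → S) : sympForm s y x = -sympForm s x y := by
  simp only [sympForm_apply, ← Finset.sum_neg_distrib]
  exact Finset.sum_congr rfl fun _ _ => by ring

lemma map_sympForm (f : S →+* S') (x y : Fin (2 * s) → S) :
    f (sympForm s x y) = sympForm s (f ∘ x) (f ∘ y) := by
  simp [sympForm_apply]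

lemma evalLamT_sympForm [Algebra ℂ S] (u v : Fin (2 * s) → S) :
    evalLamT u v (sympForm s X (tVar _)) = sympForm s u v := by
  have hX : ⇑(evalLamT u v) ∘ X = u := funext (evalLamT_X u v)
  have hT : ⇑(evalLamT u v) ∘ tVar (Fin (2 * s)) = v := funext fun j => by simp [tVar]
  rw [map_sympForm, hX, hT]

def sympBracket : TPoly (2 * s) → TPoly (2 * s) → VP (2 * s) (TPoly (2 * s)) :=
  freeBracket (sympForm s X (tVar _))

lemma isLieConf_sympBracket : IsLieConf' (2 * s) (TPoly (2 * s)) (sympBracket s) := by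
  refine ⟨freeBracket_bilin _, freeBracket_sesq _, freeBracket_skew _ ?_, freeBracket_jacobi _ ?_⟩
  · rw [evalLamT_sympForm, map_sub, map_neg, LinearMap.sub_apply, LinearMap.neg_apply,
      sympForm_self, sub_zero]
  · simp only [evalLamT_sympForm, map_add, map_neg, LinearMap.add_apply, sympForm_self,
      sympForm_swap s (lamVar _) (muVar _)]
    ring

end Symplectic

end

/-- Let `r = 2s` with `s ≥ 1` and let `R = ℂ[T₁,…,T_r] L` be the free
`ℂ[T₁,…,T_r]`-module on one generator `L` (encoded as `ℂ[T₁,…,T_{2s}]` itself with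
`L = 1`). The `λ`-bracket determined by
`[L_λ L] = Σ_{i=1}^s (λ_{s+i} T_i L − λ_i T_{s+i} L)`, extended by conformal
sesquilinearity, makes `R` a `2s`-dimensional Lie conformal algebra. -/
theorem statement_19 (s : ℕ) :
    ∃ Q : MvPolynomial (Fin (2 * s)) ℂ → MvPolynomial (Fin (2 * s)) ℂ →
        VP (2 * s) (MvPolynomial (Fin (2 * s)) ℂ),
      IsLieConf' (2 * s) (MvPolynomial (Fin (2 * s)) ℂ) Q ∧
      Q 1 1 = ∑ i : Fin s,
        (Finsupp.single
            (Finsupp.single (⟨s + i.val, by have := i.isLt; omega⟩ : Fin (2 * s)) 1)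
            ((X (⟨i.val, by have := i.isLt; omega⟩ : Fin (2 * s)) :
                MvPolynomial (Fin (2 * s)) ℂ) • (1 : MvPolynomial (Fin (2 * s)) ℂ)) -
         Finsupp.single
            (Finsupp.single (⟨i.val, by have := i.isLt; omega⟩ : Fin (2 * s)) 1)
            ((X (⟨s + i.val, by have := i.isLt; omega⟩ : Fin (2 * s)) :
                MvPolynomial (Fin (2 * s)) ℂ) • (1 : MvPolynomial (Fin (2 * s)) ℂ))) := by
  refine ⟨sympBracket s, isLieConf_sympBracket s, toMvPoly.injective ?_⟩
  rw [sympBracket, toMvPoly_freeBracket, map_one, map_one, one_mul, one_mul, sympForm_apply,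
    map_sum]
  refine Finset.sum_congr rfl fun i _ => ?_
  simp only [map_sub, toMvPoly_single, smul_eq_mul, mul_one, ← C_mul_X_eq_monomial, tVar]
  ring
end CA
end
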